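/- arXiv:1602.04589 — 2 statements merged into one kernel-verified Lean document; each statement's English description precedes it below -/
import Mathlib

section
/- Let K ≥ 2 and 0 < μ_K ≤ … ≤ μ_2 < μ_1 < 1. For each a ∈ {2,…,K}, let x_a : [0, kl(μ_1,μ_a)) → [0,∞) be the inverse of g_a. Define F_μ(y) = Σ_{a=2}^K kl(μ_1, m_a(x_a(y))) / kl(μ_a, m_a(x_a(y))) for y ∈ (0, kl(μ_1,μ_2)), and F_μ(0) = 0. Then F_μ is continuous and strictly increasing on [0, kl(μ_1,μ_2)), F_μ(0) = 0, and F_μ(y) → +∞ as y → kl(μ_1,μ_2) from below; consequently there is a unique y* ∈ (0, kl(μ_1,μ_2)) with F_μ(y*) = 1. -/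
/-!
By the envelope theorem `g_a'(x) = kl(μ_a, m_a(x)) > 0`, and the identity
`g_a(x) = kl(μ₁, μ_a) - (1 + x)·kl(m_a(x), μ_a)` shows `g_a < kl(μ₁, μ_a)`; so the inverse `x_a`
is continuous, strictly increasing, vanishes at `0` and tends to `∞` at `kl(μ₁, μ_a)`.
As `x` grows, `m_a(x)` decreases from `μ₁` towards `μ_a`, so in
`kl(μ₁, m_a(x)) / kl(μ_a, m_a(x))` the numerator increases from `0` while the denominator
decreases to `0⁺`. Hence every summand of `F_μ` is continuous, strictly increasing and vanishes at
`0` on `[0, kl(μ₁, μ₂)) ⊆ [0, kl(μ₁, μ_a))`, and the `a = 2` summand alone blows up at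
`kl(μ₁, μ₂)`. The root of `F_μ = 1` comes from the intermediate value theorem.
-/

/-- Bernoulli Kullback–Leibler divergence. -/
noncomputable def kl (x y : ℝ) : ℝ :=
  x * Real.log (x / y) + (1 - x) * Real.log ((1 - x) / (1 - y))

/-- The weighted mean `m_a(x) = (μ₁ + x μₐ)/(1+x)`. -/
noncomputable def marm (μ1 μa x : ℝ) : ℝ := (μ1 + x * μa) / (1 + x)

/-- The function `g_a(x) = kl(μ₁, m_a(x)) + x·kl(μₐ, m_a(x))`. -/
noncomputable def garm (μ1 μa x : ℝ) : ℝ :=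
  kl μ1 (marm μ1 μa x) + x * kl μa (marm μ1 μa x)

open Real Set Filter Topology

lemma kl_self (c : ℝ) : kl c c = 0 := by
  rcases eq_or_ne c 0 with rfl | hc0
  · simp [kl]
  rcases eq_or_ne (1 - c) 0 with hc1 | hc1
  · simp [kl, hc1]
  simp [kl, div_self hc0, div_self hc1]

lemma kl_eq_sub_log {a b : ℝ} (ha0 : 0 < a) (ha1 : a < 1) (hb0 : 0 < b) (hb1 : b < 1) :
    kl a b = a * (log a - log b) + (1 - a) * (log (1 - a) - log (1 - b)) := by
  rw [kl, log_div ha0.ne' hb0.ne', log_div (sub_pos.2 ha1).ne' (sub_pos.2 hb1).ne']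

lemma hasDerivAt_kl {c y : ℝ} (hc0 : 0 < c) (hc1 : c < 1) (hy0 : 0 < y) (hy1 : y < 1) :
    HasDerivAt (kl c) ((y - c) / (y * (1 - y))) y := by
  have hlog : HasDerivAt (fun z => c * (log c - log z) + (1 - c) * (log (1 - c) - log (1 - z)))
      (c * -y⁻¹ + (1 - c) * -((1 - y)⁻¹ * -1)) y :=
    (((hasDerivAt_log hy0.ne').const_sub _).const_mul c).add
      ((((hasDerivAt_log (sub_pos.2 hy1).ne').comp y
        ((hasDerivAt_id y).const_sub 1)).const_sub _).const_mul (1 - c))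
  have hkl : kl c =ᶠ[𝓝 y] fun z => c * (log c - log z) + (1 - c) * (log (1 - c) - log (1 - z)) := by
    filter_upwards [Ioo_mem_nhds hy0 hy1] with z hz
    exact kl_eq_sub_log hc0 hc1 hz.1 hz.2
  refine (hlog.congr_of_eventuallyEq hkl).congr_deriv ?_
  field_simp [hy0.ne', (by linarith : (1 : ℝ) - y ≠ 0)]
  ring

lemma continuousAt_kl {c y : ℝ} (hc0 : 0 < c) (hc1 : c < 1) (hy0 : 0 < y) (hy1 : y < 1) :
    ContinuousAt (kl c) y :=
  (hasDerivAt_kl hc0 hc1 hy0 hy1).continuousAt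

lemma kl_strictAntiOn {c : ℝ} (hc0 : 0 < c) (hc1 : c < 1) : StrictAntiOn (kl c) (Ioc 0 c) := by
  refine strictAntiOn_of_deriv_neg (convex_Ioc 0 c)
    (fun y hy => (continuousAt_kl hc0 hc1 hy.1 (hy.2.trans_lt hc1)).continuousWithinAt) ?_
  rw [interior_Ioc]
  intro y hy
  have h1y : 0 < 1 - y := by linarith [hy.2]
  rw [(hasDerivAt_kl hc0 hc1 hy.1 (hy.2.trans hc1)).deriv]
  exact div_neg_of_neg_of_pos (by linarith [hy.2]) (mul_pos hy.1 h1y)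

lemma kl_strictMonoOn {c : ℝ} (hc0 : 0 < c) (hc1 : c < 1) : StrictMonoOn (kl c) (Ico c 1) := by
  refine strictMonoOn_of_deriv_pos (convex_Ico c 1)
    (fun y hy => (continuousAt_kl hc0 hc1 (hc0.trans_le hy.1) hy.2).continuousWithinAt) ?_
  rw [interior_Ico]
  intro y hy
  have h1y : 0 < 1 - y := by linarith [hy.2]
  rw [(hasDerivAt_kl hc0 hc1 (hc0.trans hy.1) hy.2).deriv]
  exact div_pos (by linarith [hy.1]) (mul_pos (hc0.trans hy.1) h1y)

lemma kl_pos {c y : ℝ} (hc0 : 0 < c) (hc1 : c < 1) (hy0 : 0 < y) (hy1 : y < 1) (hyc : y ≠ c) :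
    0 < kl c y := by
  rw [← kl_self c]
  rcases hyc.lt_or_gt with h | h
  · exact kl_strictAntiOn hc0 hc1 ⟨hy0, h.le⟩ ⟨hc0, le_rfl⟩ h
  · exact kl_strictMonoOn hc0 hc1 ⟨le_rfl, hc1⟩ ⟨h.le, hy1⟩ h

section marm

variable {p q : ℝ}

lemma marm_zero : marm p q 0 = p := by simp [marm]

lemma marm_mem_Ioc (hqp : q < p) {x : ℝ} (hx : 0 ≤ x) : marm p q x ∈ Ioc q p := by
  have hx1 : 0 < 1 + x := by linarith
  rw [marm, mem_Ioc, lt_div_iff₀ hx1, div_le_iff₀ hx1]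
  constructor <;> nlinarith

lemma marm_strictAntiOn (hqp : q < p) : StrictAntiOn (marm p q) (Ici 0) := by
  intro x₁ hx₁ x₂ hx₂ h
  rw [marm, marm, div_lt_div_iff₀ (by linarith [mem_Ici.1 hx₂]) (by linarith [mem_Ici.1 hx₁])]
  nlinarith

lemma hasDerivAt_marm {x : ℝ} (hx : 1 + x ≠ 0) :
    HasDerivAt (marm p q) ((q - p) / (1 + x) ^ 2) x := by
  have h := (((hasDerivAt_id x).mul_const q).const_add p).div
    ((hasDerivAt_id x).const_add 1) hx
  refine h.congr_deriv ?_
  simp only [id]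
  field_simp
  ring

lemma tendsto_marm_atTop : Tendsto (marm p q) atTop (𝓝 q) := by
  have h : Tendsto (fun x : ℝ => q + (p - q) / (1 + x)) atTop (𝓝 (q + 0)) :=
    tendsto_const_nhds.add (tendsto_const_nhds.div_atTop
      (tendsto_atTop_add_const_left _ 1 tendsto_id))
  rw [add_zero] at h
  refine h.congr' ?_
  filter_upwards [eventually_ge_atTop 0] with x hx
  rw [marm]
  field_simp
  ring

end marm

section garm

variable {p q : ℝ}

lemma garm_zero : garm p q 0 = 0 := by simp [garm, marm_zero, kl_self]

lemma hasDerivAt_garm (hq0 : 0 < q) (hqp : q < p) (hp1 : p < 1) {x : ℝ} (hx : 0 ≤ x) :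
    HasDerivAt (garm p q) (kl q (marm p q x)) x := by
  obtain ⟨hqm, hmp⟩ := marm_mem_Ioc hqp hx
  have hm0 : 0 < marm p q x := hq0.trans hqm
  have hm1 : marm p q x < 1 := hmp.trans_lt hp1
  have hmarm := hasDerivAt_marm (p := p) (q := q) (x := x) (by linarith)
  have h := ((hasDerivAt_kl (hq0.trans hqp) hp1 hm0 hm1).comp x hmarm).add
    ((hasDerivAt_id x).mul ((hasDerivAt_kl hq0 (hqp.trans hp1) hm0 hm1).comp x hmarm))
  -- The chain-rule terms cancel: `m_a(x)` is the critical point of `kl(p, ·) + x·kl(q, ·)`.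
  have hcrit : (marm p q x - p) + x * (marm p q x - q) = 0 := by
    rw [marm]; field_simp; ring
  refine h.congr_deriv ?_
  simp only [id, Function.comp]
  linear_combination
    ((q - p) / (1 + x) ^ 2 / (marm p q x * (1 - marm p q x))) * hcrit

lemma garm_strictMonoOn (hq0 : 0 < q) (hqp : q < p) (hp1 : p < 1) :
    StrictMonoOn (garm p q) (Ici 0) := by
  refine strictMonoOn_of_deriv_pos (convex_Ici 0)
    (fun x hx => (hasDerivAt_garm hq0 hqp hp1 hx).continuousAt.continuousWithinAt) ?_
  rw [interior_Ici]
  intro x hx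
  obtain ⟨hqm, hmp⟩ := marm_mem_Ioc hqp (le_of_lt hx)
  rw [(hasDerivAt_garm hq0 hqp hp1 (le_of_lt hx)).deriv]
  exact kl_pos hq0 (hqp.trans hp1) (hq0.trans hqm) (hmp.trans_lt hp1) hqm.ne'

lemma garm_eq_kl_sub (hq0 : 0 < q) (hqp : q < p) (hp1 : p < 1) {x : ℝ} (hx : 0 ≤ x) :
    garm p q x = kl p q - (1 + x) * kl (marm p q x) q := by
  obtain ⟨hqm, hmp⟩ := marm_mem_Ioc hqp hx
  have hp0 : 0 < p := hq0.trans hqp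
  have hq1 : q < 1 := hqp.trans hp1
  have hm0 : 0 < marm p q x := hq0.trans hqm
  have hm1 : marm p q x < 1 := hmp.trans_lt hp1
  have hmean : (1 + x) * marm p q x = p + x * q := by
    rw [marm]; field_simp
  rw [garm, kl_eq_sub_log hp0 hp1 hm0 hm1, kl_eq_sub_log hq0 hq1 hm0 hm1,
    kl_eq_sub_log hp0 hp1 hq0 hq1, kl_eq_sub_log hm0 hm1 hq0 hq1]
  linear_combination
    (log (marm p q x) - log (1 - marm p q x) - log q + log (1 - q)) * hmean

lemma mapsTo_garm (hq0 : 0 < q) (hqp : q < p) (hp1 : p < 1) :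
    MapsTo (garm p q) (Ici 0) (Ico 0 (kl p q)) := by
  intro x hx
  obtain ⟨hqm, hmp⟩ := marm_mem_Ioc hqp hx
  have hkl : 0 < kl (marm p q x) q :=
    kl_pos (hq0.trans hqm) (hmp.trans_lt hp1) hq0 (hqp.trans hp1) hqm.ne
  refine ⟨garm_zero (p := p) (q := q) ▸
    (garm_strictMonoOn hq0 hqp hp1).monotoneOn self_mem_Ici hx hx, ?_⟩
  rw [garm_eq_kl_sub hq0 hqp hp1 hx]
  have : 0 < (1 + x) * kl (marm p q x) q := mul_pos (by linarith [mem_Ici.1 hx]) hkl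
  linarith

end garm

section inverse

variable {α β : Type*} [LinearOrder α] [LinearOrder β]

lemma MonotoneOn.strictMonoOn_of_leftInvOn {g : β → α} {X : α → β} {s : Set α} {t : Set β}
    (hg : MonotoneOn g t) (hX : MapsTo X s t) (hinv : LeftInvOn g X s) : StrictMonoOn X s := by
  intro a ha b hb hab
  by_contra! h
  have := hg (hX hb) (hX ha) h
  rw [hinv ha, hinv hb] at this
  exact hab.not_ge this

variable [TopologicalSpace α] [OrderTopology α]

lemma MonotoneOn.tendsto_nhdsLT_atTop_of_leftInvOn {g : β → α} {X : α → β} {a L : α} {c : β}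
    (hg : MonotoneOn g (Ici c)) (hgL : MapsTo g (Ici c) (Ico a L))
    (hX : MapsTo X (Ico a L) (Ici c)) (hinv : LeftInvOn g X (Ico a L)) :
    Tendsto X (𝓝[<] L) atTop := by
  refine tendsto_atTop.2 fun b => ?_
  have hb : max b c ∈ Ici c := le_max_right b c
  filter_upwards [Ioo_mem_nhdsLT (hgL hb).2] with y hy
  have hyL : y ∈ Ico a L := ⟨(hgL hb).1.trans hy.1.le, hy.2⟩
  refine (le_max_left b c).trans (not_lt.1 fun h => hy.1.not_ge ?_)
  simpa only [hinv hyL] using hg (hX hyL) hb h.le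

lemma StrictMonoOn.continuousOn_Ico_of_surjOn [TopologicalSpace β] [OrderTopology β]
    [DenselyOrdered β] {f : α → β} {a b : α} (hf : StrictMonoOn f (Ico a b))
    (hsurj : SurjOn f (Ico a b) (Ici (f a))) : ContinuousOn f (Ico a b) := by
  intro y hy
  rcases hy.1.eq_or_lt with rfl | hay
  · exact (hf.continuousWithinAt_right_of_surjOn (Ico_mem_nhdsGE hy.2)
      (hsurj.mono subset_rfl Ioi_subset_Ici_self)).mono Ico_subset_Ici_self
  · refine (hf.continuousAt_of_image_mem_nhds (Ico_mem_nhds hay hy.2) ?_).continuousWithinAt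
    exact mem_of_superset (Ioi_mem_nhds (hf ⟨le_rfl, hay.trans hy.2⟩ hy hay))
      (Ioi_subset_Ici_self.trans hsurj)

end inverse

noncomputable def klRatio (p q x : ℝ) : ℝ := kl p (marm p q x) / kl q (marm p q x)

section klRatio

variable {p q : ℝ}

lemma klRatio_zero (p q : ℝ) : klRatio p q 0 = 0 := by simp [klRatio, marm_zero, kl_self]

lemma klRatio_strictMonoOn (hq0 : 0 < q) (hqp : q < p) (hp1 : p < 1) :
    StrictMonoOn (klRatio p q) (Ici 0) := by
  intro x₁ hx₁ x₂ hx₂ h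
  have hm := marm_strictAntiOn hqp hx₁ hx₂ h
  obtain ⟨hqm₁, hmp₁⟩ := marm_mem_Ioc hqp hx₁
  obtain ⟨hqm₂, hmp₂⟩ := marm_mem_Ioc hqp hx₂
  have hp0 : 0 < p := hq0.trans hqp
  have hq1 : q < 1 := hqp.trans hp1
  have hnum : 0 ≤ kl p (marm p q x₂) :=
    kl_self p ▸ (kl_strictAntiOn hp0 hp1).antitoneOn ⟨hq0.trans hqm₂, hmp₂⟩ ⟨hp0, le_rfl⟩ hmp₂
  exact div_lt_div₀ (kl_strictAntiOn hp0 hp1 ⟨hq0.trans hqm₂, hmp₂⟩ ⟨hq0.trans hqm₁, hmp₁⟩ hm)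
    ((kl_strictMonoOn hq0 hq1).monotoneOn ⟨hqm₂.le, hmp₂.trans_lt hp1⟩
      ⟨hqm₁.le, hmp₁.trans_lt hp1⟩ hm.le)
    hnum (kl_pos hq0 hq1 (hq0.trans hqm₂) (hmp₂.trans_lt hp1) hqm₂.ne')

lemma continuousOn_klRatio (hq0 : 0 < q) (hqp : q < p) (hp1 : p < 1) :
    ContinuousOn (klRatio p q) (Ici 0) := by
  intro x hx
  obtain ⟨hqm, hmp⟩ := marm_mem_Ioc hqp hx
  have hm0 : 0 < marm p q x := hq0.trans hqm
  have hm1 : marm p q x < 1 := hmp.trans_lt hp1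
  have hmarm : ContinuousAt (marm p q) x :=
    (hasDerivAt_marm (by linarith [mem_Ici.1 hx])).continuousAt
  exact (((continuousAt_kl (hq0.trans hqp) hp1 hm0 hm1).comp hmarm).div
    ((continuousAt_kl hq0 (hqp.trans hp1) hm0 hm1).comp hmarm)
    (kl_pos hq0 (hqp.trans hp1) hm0 hm1 hqm.ne').ne').continuousWithinAt

lemma tendsto_klRatio_atTop (hq0 : 0 < q) (hqp : q < p) (hp1 : p < 1) :
    Tendsto (klRatio p q) atTop atTop := by
  have hp0 : 0 < p := hq0.trans hqp
  have hq1 : q < 1 := hqp.trans hp1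
  have hnum : Tendsto (fun x => kl p (marm p q x)) atTop (𝓝 (kl p q)) :=
    (continuousAt_kl hp0 hp1 hq0 hq1).tendsto.comp tendsto_marm_atTop
  have hden : Tendsto (fun x => kl q (marm p q x)) atTop (𝓝[>] 0) := by
    refine tendsto_nhdsWithin_iff.2 ⟨?_, ?_⟩
    · exact kl_self q ▸ (continuousAt_kl hq0 hq1 hq0 hq1).tendsto.comp tendsto_marm_atTop
    · filter_upwards [eventually_ge_atTop 0] with x hx
      obtain ⟨hqm, hmp⟩ := marm_mem_Ioc hqp hx
      exact kl_pos hq0 hq1 (hq0.trans hqm) (hmp.trans_lt hp1) hqm.ne'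
  exact (hnum.pos_mul_atTop (kl_pos hp0 hp1 hq0 hq1 hqp.ne) hden.inv_tendsto_nhdsGT_zero :)

end klRatio

section inverseGarm

variable {p q : ℝ} {X : ℝ → ℝ}

lemma leftInvOn_garm (hq0 : 0 < q) (hqp : q < p) (hp1 : p < 1)
    (hX : MapsTo X (Ico 0 (kl p q)) (Ici 0)) (hinv : LeftInvOn (garm p q) X (Ico 0 (kl p q))) :
    LeftInvOn X (garm p q) (Ici 0) :=
  (garm_strictMonoOn hq0 hqp hp1).injOn.rightInvOn_of_leftInvOn hinv (mapsTo_garm hq0 hqp hp1) hX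

lemma apply_zero_of_leftInvOn_garm (hq0 : 0 < q) (hqp : q < p) (hp1 : p < 1)
    (hX : MapsTo X (Ico 0 (kl p q)) (Ici 0)) (hinv : LeftInvOn (garm p q) X (Ico 0 (kl p q))) :
    X 0 = 0 := by
  simpa only [garm_zero] using leftInvOn_garm hq0 hqp hp1 hX hinv (self_mem_Ici (a := (0 : ℝ)))

lemma klRatio_comp_zero (hq0 : 0 < q) (hqp : q < p) (hp1 : p < 1)
    (hX : MapsTo X (Ico 0 (kl p q)) (Ici 0)) (hinv : LeftInvOn (garm p q) X (Ico 0 (kl p q))) :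
    (klRatio p q ∘ X) 0 = 0 := by
  rw [Function.comp_apply, apply_zero_of_leftInvOn_garm hq0 hqp hp1 hX hinv, klRatio_zero]

lemma strictMonoOn_of_leftInvOn_garm (hq0 : 0 < q) (hqp : q < p) (hp1 : p < 1)
    (hX : MapsTo X (Ico 0 (kl p q)) (Ici 0)) (hinv : LeftInvOn (garm p q) X (Ico 0 (kl p q))) :
    StrictMonoOn X (Ico 0 (kl p q)) :=
  (garm_strictMonoOn hq0 hqp hp1).monotoneOn.strictMonoOn_of_leftInvOn hX hinv

lemma continuousOn_of_leftInvOn_garm (hq0 : 0 < q) (hqp : q < p) (hp1 : p < 1)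
    (hX : MapsTo X (Ico 0 (kl p q)) (Ici 0)) (hinv : LeftInvOn (garm p q) X (Ico 0 (kl p q))) :
    ContinuousOn X (Ico 0 (kl p q)) := by
  refine (strictMonoOn_of_leftInvOn_garm hq0 hqp hp1 hX hinv).continuousOn_Ico_of_surjOn ?_
  rw [apply_zero_of_leftInvOn_garm hq0 hqp hp1 hX hinv]
  exact (leftInvOn_garm hq0 hqp hp1 hX hinv).surjOn (mapsTo_garm hq0 hqp hp1)

lemma strictMonoOn_klRatio_comp (hq0 : 0 < q) (hqp : q < p) (hp1 : p < 1)
    (hX : MapsTo X (Ico 0 (kl p q)) (Ici 0)) (hinv : LeftInvOn (garm p q) X (Ico 0 (kl p q))) :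
    StrictMonoOn (klRatio p q ∘ X) (Ico 0 (kl p q)) :=
  (klRatio_strictMonoOn hq0 hqp hp1).comp (strictMonoOn_of_leftInvOn_garm hq0 hqp hp1 hX hinv) hX

lemma continuousOn_klRatio_comp (hq0 : 0 < q) (hqp : q < p) (hp1 : p < 1)
    (hX : MapsTo X (Ico 0 (kl p q)) (Ici 0)) (hinv : LeftInvOn (garm p q) X (Ico 0 (kl p q))) :
    ContinuousOn (klRatio p q ∘ X) (Ico 0 (kl p q)) :=
  (continuousOn_klRatio hq0 hqp hp1).comp (continuousOn_of_leftInvOn_garm hq0 hqp hp1 hX hinv) hX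

lemma tendsto_klRatio_comp (hq0 : 0 < q) (hqp : q < p) (hp1 : p < 1)
    (hX : MapsTo X (Ico 0 (kl p q)) (Ici 0)) (hinv : LeftInvOn (garm p q) X (Ico 0 (kl p q))) :
    Tendsto (klRatio p q ∘ X) (𝓝[<] kl p q) atTop :=
  (tendsto_klRatio_atTop hq0 hqp hp1).comp <|
    (garm_strictMonoOn hq0 hqp hp1).monotoneOn.tendsto_nhdsLT_atTop_of_leftInvOn
      (mapsTo_garm hq0 hqp hp1) hX hinv

end inverseGarm

lemma Finset.strictMonoOn_sum {ι α M : Type*} [Preorder α] [AddCommMonoid M] [PartialOrder M]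
    [IsOrderedCancelAddMonoid M] {s : Finset ι} {f : ι → α → M} {t : Set α} (hs : s.Nonempty)
    (hf : ∀ i ∈ s, StrictMonoOn (f i) t) : StrictMonoOn (fun y => ∑ i ∈ s, f i y) t :=
  fun _ hy₁ _ hy₂ h => Finset.sum_lt_sum_of_nonempty hs fun i hi => hf i hi hy₁ hy₂ h

lemma Finset.tendsto_sum_atTop_of_nonneg {ι α : Type*} {s : Finset ι} {f : ι → α → ℝ}
    {l : Filter α} {i : ι} (hi : i ∈ s) (hf : Tendsto (f i) l atTop)
    (hnonneg : ∀ᶠ y in l, ∀ j ∈ s, 0 ≤ f j y) : Tendsto (fun y => ∑ j ∈ s, f j y) l atTop :=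
  tendsto_atTop_mono' l (hnonneg.mono fun _ hy => Finset.single_le_sum hy hi) hf

lemma existsUnique_eq_of_strictMonoOn_Ico {α δ : Type*} [ConditionallyCompleteLinearOrder α]
    [TopologicalSpace α] [OrderTopology α] [DenselyOrdered α] [LinearOrder δ] [TopologicalSpace δ]
    [OrderClosedTopology δ] {F : α → δ} {a b : α} {c : δ} (hab : a < b) (hc : F a < c)
    (hcont : ContinuousOn F (Ico a b)) (hmono : StrictMonoOn F (Ico a b))
    (htop : Tendsto F (𝓝[<] b) atTop) : ∃! y, y ∈ Ioo a b ∧ F y = c := by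
  have := nhdsLT_neBot_of_exists_lt ⟨a, hab⟩
  obtain ⟨z, hFz, hz⟩ := ((htop.eventually_ge_atTop c).and (Ioo_mem_nhdsLT hab)).exists
  obtain ⟨y, hy, hFy⟩ :=
    intermediate_value_Icc hz.1.le (hcont.mono (Icc_subset_Ico_right hz.2)) ⟨hc.le, hFz⟩
  have hay : a < y := hy.1.lt_of_ne (by rintro rfl; exact hc.ne hFy)
  have hyb : y < b := hy.2.trans_lt hz.2
  refine ⟨y, ⟨⟨hay, hyb⟩, hFy⟩, fun y' hy' => ?_⟩
  exact hmono.injOn (Ioo_subset_Ico_self hy'.1) ⟨hay.le, hyb⟩ (hy'.2.trans hFy.symm)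

/-- Arm `a` of the paper is index `a - 1`. -/
theorem F_properties (K : ℕ) (μ : Fin (K + 2) → ℝ)
    (hpos : ∀ a, 0 < μ a) (h1 : μ 0 < 1) (h2 : μ 1 < μ 0)
    (hsort : ∀ a b : Fin (K + 2), a ≠ 0 → a ≤ b → μ b ≤ μ a)
    (x : Fin (K + 2) → ℝ → ℝ)
    (hx : ∀ a : Fin (K + 2), a ≠ 0 → ∀ y ∈ Set.Ico 0 (kl (μ 0) (μ a)),
      0 ≤ x a y ∧ garm (μ 0) (μ a) (x a y) = y) :
    let F : ℝ → ℝ := fun y => ∑ a ∈ Finset.univ.erase (0 : Fin (K + 2)),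
      kl (μ 0) (marm (μ 0) (μ a) (x a y)) / kl (μ a) (marm (μ 0) (μ a) (x a y))
    F 0 = 0 ∧
    ContinuousOn F (Set.Ico 0 (kl (μ 0) (μ 1))) ∧
    StrictMonoOn F (Set.Ico 0 (kl (μ 0) (μ 1))) ∧
    Filter.Tendsto F (nhdsWithin (kl (μ 0) (μ 1)) (Set.Iio (kl (μ 0) (μ 1)))) Filter.atTop ∧
    ∃! y : ℝ, y ∈ Set.Ioo 0 (kl (μ 0) (μ 1)) ∧ F y = 1 := by
  intro F
  set L := kl (μ 0) (μ 1)
  set S := Finset.univ.erase (0 : Fin (K + 2))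
  have h1S : (1 : Fin (K + 2)) ∈ S := Finset.mem_erase.2 ⟨Fin.zero_lt_one.ne', Finset.mem_univ 1⟩
  have hle : ∀ a ∈ S, μ a ≤ μ 1 := fun a ha =>
    hsort 1 a (Finset.ne_of_mem_erase h1S) (Fin.one_le_of_ne_zero (Finset.ne_of_mem_erase ha))
  have hlt : ∀ a ∈ S, μ a < μ 0 := fun a ha => (hle a ha).trans_lt h2
  have hsub : ∀ a ∈ S, Ico 0 L ⊆ Ico 0 (kl (μ 0) (μ a)) := fun a ha =>
    Ico_subset_Ico_right <| (kl_strictAntiOn (hpos 0) h1).antitoneOn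
      ⟨hpos a, (hlt a ha).le⟩ ⟨hpos 1, h2.le⟩ (hle a ha)
  have hXmaps : ∀ a ∈ S, MapsTo (x a) (Ico 0 (kl (μ 0) (μ a))) (Ici 0) :=
    fun a ha y hy => (hx a (Finset.ne_of_mem_erase ha) y hy).1
  have hXinv : ∀ a ∈ S, LeftInvOn (garm (μ 0) (μ a)) (x a) (Ico 0 (kl (μ 0) (μ a))) :=
    fun a ha y hy => (hx a (Finset.ne_of_mem_erase ha) y hy).2
  have hzero : ∀ a ∈ S, (klRatio (μ 0) (μ a) ∘ x a) 0 = 0 := fun a ha =>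
    klRatio_comp_zero (hpos a) (hlt a ha) h1 (hXmaps a ha) (hXinv a ha)
  have hmono : ∀ a ∈ S, StrictMonoOn (klRatio (μ 0) (μ a) ∘ x a) (Ico 0 L) :=
    fun a ha => (strictMonoOn_klRatio_comp (hpos a) (hlt a ha) h1 (hXmaps a ha) (hXinv a ha)).mono
      (hsub a ha)
  have hnonneg : ∀ y ∈ Ico 0 L, ∀ a ∈ S, 0 ≤ (klRatio (μ 0) (μ a) ∘ x a) y :=
    fun y hy a ha => hzero a ha ▸ (hmono a ha).monotoneOn ⟨le_rfl, hy.1.trans_lt hy.2⟩ hy hy.1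
  have hF0 : F 0 = 0 := Finset.sum_eq_zero hzero
  have hcont : ContinuousOn F (Ico 0 L) := continuousOn_finsetSum S fun a ha =>
    (continuousOn_klRatio_comp (hpos a) (hlt a ha) h1 (hXmaps a ha) (hXinv a ha)).mono (hsub a ha)
  have hFmono : StrictMonoOn F (Ico 0 L) := Finset.strictMonoOn_sum ⟨1, h1S⟩ hmono
  have hL : 0 < L := kl_pos (hpos 0) h1 (hpos 1) (h2.trans h1) h2.ne
  have htop : Tendsto F (𝓝[<] L) atTop :=
    Finset.tendsto_sum_atTop_of_nonneg h1S
      (tendsto_klRatio_comp (hpos 1) h2 h1 (hXmaps 1 h1S) (hXinv 1 h1S))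
      (eventually_of_mem (Ico_mem_nhdsLT hL) hnonneg)
  exact ⟨hF0, hcont, hFmono, htop,
    existsUnique_eq_of_strictMonoOn_Ico hL (hF0.trans_lt zero_lt_one) hcont hFmono htop⟩
end

section
/- Let 0 < μ_2 < μ_1 < 1. There exists a unique μ* ∈ (μ_2, μ_1) such that kl(μ_1, μ*) = kl(μ_2, μ*). Moreover, sup_{α ∈ [0,1]} I_α(μ_1, μ_2) = kl(μ_1, μ*) = kl(μ_2, μ*), and the supremum is attained at the unique α* ∈ (0,1) satisfying α*·μ_1 + (1−α*)·μ_2 = μ* (this common value is the 'reversed' Chernoff information d_*(μ_1,μ_2)). -/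
noncomputable def Ialpha (α x y : ℝ) : ℝ :=
  α * kl x (α * x + (1 - α) * y) + (1 - α) * kl y (α * x + (1 - α) * y)

open Real Set InformationTheory

lemma mul_log_div_of_ne_zero {x y : ℝ} (hy : y ≠ 0) :
    x * log (x / y) = x * log x - x * log y := by
  rcases eq_or_ne x 0 with rfl | hx
  · simp
  · rw [log_div hx hy, mul_sub]

lemma kl_eq_sub {x y : ℝ} (hy0 : y ≠ 0) (hy1 : y ≠ 1) :
    kl x y = x * log x + (1 - x) * log (1 - x) - (x * log y + (1 - x) * log (1 - y)) := by
  rw [kl, mul_log_div_of_ne_zero hy0, mul_log_div_of_ne_zero (sub_ne_zero.2 hy1.symm)]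
  ring

lemma kl_self_s11 {x : ℝ} (hx0 : x ≠ 0) (hx1 : x ≠ 1) : kl x x = 0 := by
  rw [kl_eq_sub hx0 hx1, sub_self]

lemma kl_eq_klFun {x y : ℝ} (hy0 : y ≠ 0) (hy1 : y ≠ 1) :
    kl x y = y * klFun (x / y) + (1 - y) * klFun ((1 - x) / (1 - y)) := by
  have : 1 - y ≠ 0 := sub_ne_zero.2 hy1.symm
  simp only [kl, klFun]
  field_simp
  ring

lemma kl_nonneg {x y : ℝ} (hx : x ∈ Icc 0 1) (hy : y ∈ Ioo 0 1) : 0 ≤ kl x y := by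
  rw [kl_eq_klFun hy.1.ne' hy.2.ne]
  have := klFun_nonneg (div_nonneg hx.1 hy.1.le)
  have := klFun_nonneg (div_nonneg (sub_nonneg.2 hx.2) (sub_pos.2 hy.2).le)
  have := hy.1
  have := sub_pos.2 hy.2
  positivity

lemma kl_eq_zero_iff {x y : ℝ} (hx : x ∈ Icc 0 1) (hy : y ∈ Ioo 0 1) : kl x y = 0 ↔ x = y := by
  refine ⟨fun h => ?_, fun h => by rw [h]; exact kl_self_s11 hy.1.ne' hy.2.ne⟩
  rw [kl_eq_klFun hy.1.ne' hy.2.ne] at h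
  have h₁ := mul_nonneg hy.1.le (klFun_nonneg (div_nonneg hx.1 hy.1.le))
  have h₂ := mul_nonneg (sub_pos.2 hy.2).le
    (klFun_nonneg (div_nonneg (sub_nonneg.2 hx.2) (sub_pos.2 hy.2).le))
  have : y * klFun (x / y) = 0 := by linarith
  rw [mul_eq_zero, klFun_eq_zero_iff (div_nonneg hx.1 hy.1.le), div_eq_one_iff_eq hy.1.ne'] at this
  exact this.resolve_left hy.1.ne'

lemma kl_pos_s11 {x y : ℝ} (hx : x ∈ Icc 0 1) (hy : y ∈ Ioo 0 1) (hxy : x ≠ y) : 0 < kl x y :=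
  (kl_nonneg hx hy).lt_of_ne' ((kl_eq_zero_iff hx hy).not.2 hxy)

lemma continuousOn_kl_right (x : ℝ) : ContinuousOn (kl x) (Ioo 0 1) := by
  refine ContinuousOn.congr
    (f := fun y => x * log x + (1 - x) * log (1 - x) - (x * log y + (1 - x) * log (1 - y)))
    ?_ fun y hy => kl_eq_sub hy.1.ne' hy.2.ne
  refine continuousOn_const.sub (continuousOn_const.mul ?_ |>.add (continuousOn_const.mul ?_))
  · exact continuousOn_log.mono fun y hy => hy.1.ne'
  · exact continuousOn_log.comp (continuousOn_const.sub continuousOn_id)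
      fun y hy => (sub_pos.2 hy.2).ne'

lemma kl_sub_kl {x y m : ℝ} (hm0 : m ≠ 0) (hm1 : m ≠ 1) :
    kl x m - kl y m = x * log x + (1 - x) * log (1 - x) - (y * log y + (1 - y) * log (1 - y))
      - (x - y) * (log m - log (1 - m)) := by
  rw [kl_eq_sub hm0 hm1, kl_eq_sub hm0 hm1]
  ring

lemma strictAntiOn_kl_sub_kl {x y : ℝ} (hyx : y < x) :
    StrictAntiOn (fun m => kl x m - kl y m) (Ioo 0 1) := by
  intro a ha b hb hab
  simp only [kl_sub_kl ha.1.ne' ha.2.ne, kl_sub_kl hb.1.ne' hb.2.ne]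
  have hb' : 0 < 1 - b := sub_pos.2 hb.2
  gcongr
  exact ha.1

theorem existsUnique_kl_eq {x y : ℝ} (hy : 0 < y) (hyx : y < x) (hx : x < 1) :
    ∃! m, m ∈ Ioo y x ∧ kl x m = kl y m := by
  have hsub : Icc y x ⊆ Ioo 0 1 := Icc_subset_Ioo hy hx
  have hx' : x ∈ Ioo 0 1 := hsub ⟨hyx.le, le_rfl⟩
  have hy' : y ∈ Ioo 0 1 := hsub ⟨le_rfl, hyx.le⟩
  have hcont : ContinuousOn (fun m => kl x m - kl y m) (Icc y x) :=
    ((continuousOn_kl_right x).sub (continuousOn_kl_right y)).mono hsub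
  have hneg : kl x x - kl y x < 0 := by
    rw [kl_self_s11 hx'.1.ne' hx'.2.ne]
    linarith [kl_pos_s11 (Ioo_subset_Icc_self hy') hx' hyx.ne]
  have hpos : 0 < kl x y - kl y y := by
    rw [kl_self_s11 hy'.1.ne' hy'.2.ne]
    linarith [kl_pos_s11 (Ioo_subset_Icc_self hx') hy' hyx.ne']
  obtain ⟨m, hm, hm_zero⟩ := intermediate_value_Ioo' hyx.le hcont ⟨hneg, hpos⟩
  refine ⟨m, ⟨hm, sub_eq_zero.1 hm_zero⟩, fun m' ⟨hm', hkl⟩ => ?_⟩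
  refine (strictAntiOn_kl_sub_kl hyx).injOn (hsub (Ioo_subset_Icc_self hm'))
    (hsub (Ioo_subset_Icc_self hm)) ?_
  simp only [hm_zero, hkl, sub_self]

lemma mul_kl_add_mul_kl {α x y m : ℝ} (hm0 : m ≠ 0) (hm1 : m ≠ 1)
    (hz0 : α * x + (1 - α) * y ≠ 0) (hz1 : α * x + (1 - α) * y ≠ 1) :
    α * kl x m + (1 - α) * kl y m = Ialpha α x y + kl (α * x + (1 - α) * y) m := by
  simp only [Ialpha, kl_eq_sub hm0 hm1, kl_eq_sub hz0 hz1]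
  ring

lemma Ialpha_eq_kl_sub_kl {α x y m : ℝ} (hm : m ∈ Ioo 0 1)
    (hz : α * x + (1 - α) * y ∈ Ioo 0 1) (h : kl x m = kl y m) :
    Ialpha α x y = kl x m - kl (α * x + (1 - α) * y) m := by
  have := mul_kl_add_mul_kl (α := α) (x := x) (y := y) hm.1.ne' hm.2.ne hz.1.ne' hz.2.ne
  rw [← h] at this
  linarith

lemma mix_mem_Icc {α x y : ℝ} (hα : α ∈ Icc 0 1) (hyx : y ≤ x) :
    α * x + (1 - α) * y ∈ Icc y x :=
  ⟨by nlinarith [hα.1], by nlinarith [hα.2]⟩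

lemma exists_mem_Ioo_mix_eq {x y m : ℝ} (hm : m ∈ Ioo y x) :
    ∃ α ∈ Ioo 0 1, α * x + (1 - α) * y = m := by
  have hxy : 0 < x - y := by linarith [hm.1, hm.2]
  refine ⟨(m - y) / (x - y),
    ⟨div_pos (sub_pos.2 hm.1) hxy, (div_lt_one hxy).2 (by linarith [hm.2])⟩, ?_⟩
  field_simp
  ring

lemma mix_injective {x y : ℝ} (hyx : y ≠ x) :
    Function.Injective (fun α : ℝ => α * x + (1 - α) * y) := by
  intro α β h
  have : (α - β) * (x - y) = 0 := by simp only at h; linarith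
  exact sub_eq_zero.1 ((mul_eq_zero.1 this).resolve_right (sub_ne_zero.2 hyx.symm))

/-- there is a unique `μ* ∈ (μ₂,μ₁)` with `kl(μ₁,μ*) = kl(μ₂,μ*)`;
the supremum of `α ↦ I_α(μ₁,μ₂)` over `[0,1]` equals this common value (the
'reversed' Chernoff information), and it is attained at the unique `α* ∈ (0,1)`
with `α*μ₁ + (1−α*)μ₂ = μ*`. -/
theorem chernoff_information (μ1 μ2 : ℝ) (h0 : 0 < μ2) (h21 : μ2 < μ1) (h1 : μ1 < 1) :
    ∃ mustar ∈ Set.Ioo μ2 μ1,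
      kl μ1 mustar = kl μ2 mustar ∧
      (∀ m ∈ Set.Ioo μ2 μ1, kl μ1 m = kl μ2 m → m = mustar) ∧
      ∃ astar ∈ Set.Ioo (0 : ℝ) 1,
        astar * μ1 + (1 - astar) * μ2 = mustar ∧
        IsGreatest ((fun α => Ialpha α μ1 μ2) '' Set.Icc 0 1) (kl μ1 mustar) ∧
        Ialpha astar μ1 μ2 = kl μ1 mustar ∧
        ∀ α ∈ Set.Icc (0 : ℝ) 1, Ialpha α μ1 μ2 = kl μ1 mustar → α = astar := by
  obtain ⟨μs, ⟨hμs, hkl⟩, huniq⟩ := existsUnique_kl_eq h0 h21 h1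
  obtain ⟨αs, hαs_mem, hαs⟩ := exists_mem_Ioo_mix_eq hμs
  have hsub : Icc μ2 μ1 ⊆ Ioo 0 1 := Icc_subset_Ioo h0 h1
  have hμs01 : μs ∈ Ioo 0 1 := hsub (Ioo_subset_Icc_self hμs)
  have hmix : ∀ α ∈ Icc (0 : ℝ) 1, α * μ1 + (1 - α) * μ2 ∈ Ioo 0 1 :=
    fun α hα => hsub (mix_mem_Icc hα h21.le)
  have hI : ∀ α ∈ Icc (0 : ℝ) 1,
      Ialpha α μ1 μ2 = kl μ1 μs - kl (α * μ1 + (1 - α) * μ2) μs :=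
    fun α hα => Ialpha_eq_kl_sub_kl hμs01 (hmix α hα) hkl
  have hIαs : Ialpha αs μ1 μ2 = kl μ1 μs := by
    rw [hI αs (Ioo_subset_Icc_self hαs_mem), hαs, kl_self_s11 hμs01.1.ne' hμs01.2.ne, sub_zero]
  refine ⟨μs, hμs, hkl, fun m hm hm' => huniq m ⟨hm, hm'⟩, αs, hαs_mem, hαs,
    ⟨⟨αs, Ioo_subset_Icc_self hαs_mem, hIαs⟩, ?_⟩, hIαs, fun α hα hIα => ?_⟩
  · rintro _ ⟨α, hα, rfl⟩
    exact (hI α hα).trans_le (sub_le_self _ (kl_nonneg (Ioo_subset_Icc_self (hmix α hα)) hμs01))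
  · rw [hI α hα, sub_eq_self, kl_eq_zero_iff (Ioo_subset_Icc_self (hmix α hα)) hμs01,
      ← hαs] at hIα
    exact mix_injective h21.ne hIα
end
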